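/- Assume additionally that there is a linear involution θ : 𝔤 → 𝔤 with θ(𝔤_γ) = 𝔤_{−γ} for all γ ∈ Δ(𝔤) and π(θ(Y)) = −π(Y)* for all Y ∈ 𝔤 (where π(Y)* is the adjoint of π(Y)), and a subset Δ(𝔤)⁺ ⊆ Δ(𝔤) with Δ(𝔤) the disjoint union of Δ(𝔤)⁺ and −Δ(𝔤)⁺. Then an A-invariant subspace W of V is nice if and only if π(𝔤_γ)W ⊥ W for every γ ∈ Δ(𝔤)⁺. -/

import Mathlib

open scoped InnerProductSpace
open Finset
open scoped Classical

/-- The (restricted) moment map of a linear family of operators `π` on an inner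
product space `V`: `momentMap π v` is the unique element of `E` with
`⟪momentMap π v, Y⟫ = ⟪π Y v, v⟫ / ‖v‖²` for all `Y`. -/
noncomputable def momentMap {E V : Type*} [NormedAddCommGroup E] [InnerProductSpace ℝ E]
    [FiniteDimensional ℝ E] [NormedAddCommGroup V] [InnerProductSpace ℝ V]
    (π : E →ₗ[ℝ] V →L[ℝ] V) (v : V) : E :=
  (InnerProductSpace.toDual ℝ E).symm <| LinearMap.toContinuousLinearMap
    { toFun := fun X => ⟪(π X) v, v⟫_ℝ / ‖v‖ ^ 2
      map_add' := fun X Y => by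
        simp [map_add, ContinuousLinearMap.add_apply, inner_add_left, add_div]
      map_smul' := fun c X => by
        simp [map_smul, ContinuousLinearMap.smul_apply, inner_smul_left, mul_div_assoc] }

/-- The weight space `V_α = {v : ∀ X ∈ 𝔞, π(X)v = ⟪α,X⟫v}`. -/
def wtSpace {E V : Type*} [NormedAddCommGroup E] [InnerProductSpace ℝ E]
    [NormedAddCommGroup V] [InnerProductSpace ℝ V]
    (π : E →ₗ[ℝ] V →L[ℝ] V) (𝔞 : Submodule ℝ E) (α : E) : Submodule ℝ V where
  carrier := {v | ∀ X ∈ 𝔞, (π X) v = ⟪α, X⟫_ℝ • v}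
  add_mem' := fun {a b} ha hb X hX => by rw [map_add, ha X hX, hb X hX, smul_add]
  zero_mem' := fun X hX => by simp
  smul_mem' := fun t a ha X hX => by rw [map_smul, ha X hX, smul_comm]

/-- The (restricted) root space `𝔤_γ = {Y : ∀ X ∈ 𝔞, [X,Y] = ⟪γ,X⟫Y}`. -/
def rootSpace {E : Type*} [NormedAddCommGroup E] [InnerProductSpace ℝ E]
    (bk : E →ₗ[ℝ] E →ₗ[ℝ] E) (𝔞 : Submodule ℝ E) (γ : E) : Submodule ℝ E where
  carrier := {Y | ∀ X ∈ 𝔞, bk X Y = ⟪γ, X⟫_ℝ • Y}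
  add_mem' := fun {a b} ha hb X hX => by rw [map_add, ha X hX, hb X hX, smul_add]
  zero_mem' := fun X hX => by simp
  smul_mem' := fun t a ha X hX => by rw [map_smul, ha X hX, smul_comm]

/-- A subspace `W ⊆ V` is `A`-invariant if `π(X)W ⊆ W` for all `X ∈ 𝔞`. -/
def AInvariant {E V : Type*} [NormedAddCommGroup E] [InnerProductSpace ℝ E]
    [NormedAddCommGroup V] [InnerProductSpace ℝ V]
    (π : E →ₗ[ℝ] V →L[ℝ] V) (𝔞 : Submodule ℝ E) (W : Submodule ℝ V) : Prop :=
  ∀ X ∈ 𝔞, ∀ w ∈ W, (π X) w ∈ W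

/-- An `A`-invariant subspace `W ⊆ V` is a nice space if `momentMap π w ∈ 𝔞` for
every nonzero `w ∈ W`. -/
def IsNiceSpace {E V : Type*} [NormedAddCommGroup E] [InnerProductSpace ℝ E]
    [FiniteDimensional ℝ E] [NormedAddCommGroup V] [InnerProductSpace ℝ V]
    (π : E →ₗ[ℝ] V →L[ℝ] V) (𝔞 : Submodule ℝ E) (W : Submodule ℝ V) : Prop :=
  AInvariant π 𝔞 W ∧ ∀ w ∈ W, w ≠ 0 → momentMap π w ∈ 𝔞


/-! For `w ≠ 0`, `⟪m(w), Y⟫ = 0` iff `⟪π(Y)w, w⟫ = 0`, and `𝔞ᗮ = 𝔪 ⊕ ⨁ 𝔤_γ`. As `π` is skew on `𝔪`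
and `θ` swaps `𝔤_γ` and `𝔤_{-γ}`, `W` is nice iff `⟪π(Y)w, w⟫ = 0` for every `w ∈ W` and every
`Y ∈ 𝔤_γ`, `γ ∈ Δ(𝔤)⁺`. This diagonal vanishing upgrades to `π(𝔤_γ)W ⊥ W`: the form
`β(u, z) = ⟪π(Y)u, z⟫` is then alternating on `W`, while `[π(γ), π(Y)] = ‖γ‖² π(Y)` with `π(γ)`
symmetric and preserving `W` gives `β(π(γ)u, z) = β(u, π(γ)z) - ‖γ‖² β(u, z)`; comparing with
the transposed identity yields `β = 0`. -/

section MomentMap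

variable {E V : Type*} [NormedAddCommGroup E] [InnerProductSpace ℝ E] [FiniteDimensional ℝ E]
  [NormedAddCommGroup V] [InnerProductSpace ℝ V] (π : E →ₗ[ℝ] V →L[ℝ] V)

theorem momentMap_inner (v : V) (Y : E) :
    ⟪momentMap π v, Y⟫_ℝ = ⟪(π Y) v, v⟫_ℝ / ‖v‖ ^ 2 := by
  simp [momentMap, InnerProductSpace.toDual_symm_apply]

theorem inner_momentMap_eq_zero_iff {v : V} (hv : v ≠ 0) (Y : E) :
    ⟪momentMap π v, Y⟫_ℝ = 0 ↔ ⟪(π Y) v, v⟫_ℝ = 0 := by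
  rw [momentMap_inner, div_eq_zero_iff, or_iff_left (pow_ne_zero 2 (norm_ne_zero_iff.mpr hv))]

theorem mem_orthogonal_span_momentMap_iff {v : V} (hv : v ≠ 0) (Y : E) :
    Y ∈ (ℝ ∙ momentMap π v)ᗮ ↔ ⟪(π Y) v, v⟫_ℝ = 0 := by
  rw [Submodule.mem_orthogonal_singleton_iff_inner_right, inner_momentMap_eq_zero_iff π hv]

theorem inner_apply_self_eq_zero_of_momentMap_mem {K : Submodule ℝ E} {v : V}
    (hv : v ≠ 0 → momentMap π v ∈ K) {Y : E} (hY : Y ∈ Kᗮ) : ⟪(π Y) v, v⟫_ℝ = 0 := by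
  rcases eq_or_ne v 0 with rfl | hv0
  · simp
  exact (inner_momentMap_eq_zero_iff π hv0 Y).1 <|
    Submodule.inner_right_of_mem_orthogonal (hv hv0) hY

end MomentMap

theorem inner_apply_self_eq_zero_of_mem_map {E V : Type*} [NormedAddCommGroup E]
    [InnerProductSpace ℝ E] [NormedAddCommGroup V] [InnerProductSpace ℝ V]
    (π : E →ₗ[ℝ] V →L[ℝ] V) {θ : E →ₗ[ℝ] E}
    (hθ : ∀ Z : E, ∀ v w : V, ⟪(π (θ Z)) v, w⟫_ℝ = -⟪v, (π Z) w⟫_ℝ) {S : Submodule ℝ E} {v : V}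
    (hS : ∀ Y ∈ S, ⟪(π Y) v, v⟫_ℝ = 0) {Y : E} (hY : Y ∈ S.map θ) : ⟪(π Y) v, v⟫_ℝ = 0 := by
  obtain ⟨Y', hY', rfl⟩ := hY
  rw [hθ, real_inner_comm, hS Y' hY', neg_zero]

theorem Submodule.eq_orthogonal_of_sup_eq_top {𝕜 E : Type*} [RCLike 𝕜] [NormedAddCommGroup E]
    [InnerProductSpace 𝕜 E] {K L : Submodule 𝕜 E} (h : K ⊔ L = ⊤) (hL : L ≤ Kᗮ) : L = Kᗮ :=
  (le_iff_eq_of_codisjoint_of_disjoint (codisjoint_iff.mpr (by rw [sup_comm, h]))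
    K.orthogonal_disjoint).mp hL

theorem Submodule.orthogonal_le_of_sup_eq_top {𝕜 E : Type*} [RCLike 𝕜] [NormedAddCommGroup E]
    [InnerProductSpace 𝕜 E] {K L : Submodule 𝕜 E} [K.HasOrthogonalProjection] (h : K ⊔ L = ⊤)
    (hL : L ≤ Kᗮ) : Lᗮ ≤ K := by
  rw [eq_orthogonal_of_sup_eq_top h hL, orthogonal_orthogonal]

section Operators

variable {V : Type*} [NormedAddCommGroup V] [InnerProductSpace ℝ V]

theorem inner_apply_eq_neg_of_forall_inner_apply_self_eq_zero {T : V →L[ℝ] V}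
    {W : Submodule ℝ V} (hT : ∀ w ∈ W, ⟪T w, w⟫_ℝ = 0) {u z : V} (hu : u ∈ W) (hz : z ∈ W) :
    ⟪T u, z⟫_ℝ = -⟪T z, u⟫_ℝ := by
  have h := hT (u + z) (W.add_mem hu hz)
  rw [map_add, inner_add_left, inner_add_right, inner_add_right, hT u hu, hT z hz] at h
  linarith

theorem inner_apply_self_eq_zero_of_skew {T : V →L[ℝ] V}
    (hT : ∀ v w : V, ⟪T v, w⟫_ℝ = -⟪v, T w⟫_ℝ) (v : V) : ⟪T v, v⟫_ℝ = 0 := by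
  have h := hT v v
  rw [real_inner_comm (T v) v] at h
  linarith

theorem inner_apply_eq_zero_of_commutator_eq_smul {A B : V →L[ℝ] V} {c : ℝ} (hc : c ≠ 0)
    (hA : (A : V →ₗ[ℝ] V).IsSymmetric) (hAB : A * B - B * A = c • B) {W : Submodule ℝ V}
    (hW : ∀ w ∈ W, A w ∈ W) (hB : ∀ w ∈ W, ⟪B w, w⟫_ℝ = 0) {u z : V} (hu : u ∈ W)
    (hz : z ∈ W) : ⟪B u, z⟫_ℝ = 0 := by
  have hBA : ∀ a b : V, ⟪B (A a), b⟫_ℝ = ⟪B a, A b⟫_ℝ - c * ⟪B a, b⟫_ℝ := fun a b => by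
    have h := congrArg (fun T : V →L[ℝ] V => ⟪T a, b⟫_ℝ) hAB
    change ⟪A (B a) - B (A a), b⟫_ℝ = ⟪c • B a, b⟫_ℝ at h
    rw [inner_sub_left, real_inner_smul_left] at h
    have hsymm : ⟪A (B a), b⟫_ℝ = ⟪B a, A b⟫_ℝ := hA (B a) b
    linarith
  have hskew {a b : V} (ha : a ∈ W) (hb : b ∈ W) : ⟪B a, b⟫_ℝ = -⟪B b, a⟫_ℝ :=
    inner_apply_eq_neg_of_forall_inner_apply_self_eq_zero hB ha hb
  -- `β(a, b) = ⟪B a, b⟫` is alternating on `W`, so `hBA` and its transpose force `2cβ = 0`.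
  have key : c * ⟪B u, z⟫_ℝ = 0 := by
    linear_combination (hBA u z - hBA z u - hskew (hW u hu) hz + hskew hu (hW z hz)
      + c * hskew hu hz) / 2
  exact (mul_eq_zero.mp key).resolve_left hc

end Operators

theorem isNice_iff_positive_roots_orthogonality_general
    {𝔤 V : Type*} [NormedAddCommGroup 𝔤] [InnerProductSpace ℝ 𝔤] [FiniteDimensional ℝ 𝔤]
    [NormedAddCommGroup V] [InnerProductSpace ℝ V]
    -- the Lie bracket of `𝔤` and the representation `π : 𝔤 → 𝔤𝔩(V)`:
    (bk : 𝔤 →ₗ[ℝ] 𝔤 →ₗ[ℝ] 𝔤)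
    (π : 𝔤 →ₗ[ℝ] V →L[ℝ] V)
    (hrep : ∀ X Y : 𝔤, π (bk X Y) = π X * π Y - π Y * π X)
    -- `𝔞` is an abelian subalgebra acting by self-adjoint operators:
    (𝔞 : Submodule ℝ 𝔤)
    (hsa : ∀ X ∈ 𝔞, ∀ v w : V, ⟪(π X) v, w⟫_ℝ = ⟪v, (π X) w⟫_ℝ)
    -- roots and weights:
    (Δ𝔤 : Finset 𝔤) (hΔ𝔤 : ∀ γ ∈ Δ𝔤, γ ∈ 𝔞 ∧ γ ≠ 0)
    -- `𝔤₀ = 𝔞 ⊕ 𝔪` is the centralizer of `𝔞`, `π` is skew-adjoint on `𝔪`: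
    (𝔪 : Submodule ℝ 𝔤)
    (hskew : ∀ Y ∈ 𝔪, ∀ v w : V, ⟪(π Y) v, w⟫_ℝ = -⟪v, (π Y) w⟫_ℝ)
    (h𝔞𝔪 : ∀ X ∈ 𝔞, ∀ Y ∈ 𝔪, ⟪X, Y⟫_ℝ = 0)
    -- the orthogonal restricted-root space decomposition of `𝔤`:
    (h𝔤dec : (𝔞 ⊔ 𝔪) ⊔ (⨆ γ ∈ Δ𝔤, rootSpace bk 𝔞 γ) = ⊤)
    (h𝔤orth : ∀ γ ∈ Δ𝔤, ∀ Y ∈ rootSpace bk 𝔞 γ, ∀ Z : 𝔤,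
      (Z ∈ 𝔞 ⊔ 𝔪 ∨ ∃ γ' ∈ Δ𝔤, γ' ≠ γ ∧ Z ∈ rootSpace bk 𝔞 γ') → ⟪Y, Z⟫_ℝ = 0)
    (W : Submodule ℝ V) (hWinv : AInvariant π 𝔞 W)
    -- the Cartan involution `θ`:
    (θ : 𝔤 →ₗ[ℝ] 𝔤)
    (hθroot : ∀ γ ∈ Δ𝔤, Submodule.map θ (rootSpace bk 𝔞 γ) = rootSpace bk 𝔞 (-γ))
    (hθadj : ∀ Z : 𝔤, ∀ v w : V, ⟪(π (θ Z)) v, w⟫_ℝ = -⟪v, (π Z) w⟫_ℝ)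
    -- a set of positive roots:
    (Δp : Finset 𝔤) (hΔp : ∀ γ : 𝔤, γ ∈ Δ𝔤 ↔ (γ ∈ Δp ∨ -γ ∈ Δp))
    :
    (∀ w ∈ W, w ≠ 0 → momentMap π w ∈ 𝔞) ↔
      (∀ γ ∈ Δp, ∀ Y ∈ rootSpace bk 𝔞 γ, ∀ u ∈ W, ∀ z ∈ W, ⟪(π Y) u, z⟫_ℝ = 0) := by
  have hroot_perp (γ) (hγ : γ ∈ Δ𝔤) : rootSpace bk 𝔞 γ ≤ 𝔞ᗮ := fun Y hY =>
    (Submodule.mem_orthogonal' _ _).2 fun X hX =>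
      h𝔤orth γ hγ Y hY X (.inl (Submodule.mem_sup_left hX))
  constructor
  · intro hnice γ hγp Y hY u hu z hz
    obtain ⟨hγ𝔞, hγ0⟩ := hΔ𝔤 γ ((hΔp γ).2 (.inl hγp))
    have hYW (w) (hw : w ∈ W) : ⟪(π Y) w, w⟫_ℝ = 0 :=
      inner_apply_self_eq_zero_of_momentMap_mem π (hnice w hw)
        (hroot_perp γ ((hΔp γ).2 (.inl hγp)) hY)
    refine inner_apply_eq_zero_of_commutator_eq_smul (inner_self_ne_zero.2 hγ0) (hsa γ hγ𝔞)
      ?_ (hWinv γ hγ𝔞) hYW hu hz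
    rw [← hrep, hY γ hγ𝔞, map_smul]
  · intro hpos w hw hw0
    have hroots (γ) (hγ : γ ∈ Δ𝔤) (Y) (hY : Y ∈ rootSpace bk 𝔞 γ) : ⟪(π Y) w, w⟫_ℝ = 0 := by
      rcases (hΔp γ).1 hγ with hγp | hγn
      · exact hpos γ hγp Y hY w hw w hw
      · refine inner_apply_self_eq_zero_of_mem_map π hθadj
          (fun Y' hY' => hpos _ hγn Y' hY' w hw w hw) ?_
        rwa [hθroot _ ((hΔp _).2 (.inl hγn)), neg_neg]
    have hperp : 𝔪 ⊔ ⨆ γ ∈ Δ𝔤, rootSpace bk 𝔞 γ ≤ (ℝ ∙ momentMap π w)ᗮ :=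
      sup_le (fun Z hZ => (mem_orthogonal_span_momentMap_iff π hw0 Z).2
          (inner_apply_self_eq_zero_of_skew (hskew Z hZ) w))
        (iSup₂_le fun γ hγ Y hY =>
          (mem_orthogonal_span_momentMap_iff π hw0 Y).2 (hroots γ hγ Y hY))
    have h𝔪_perp : 𝔪 ≤ 𝔞ᗮ := fun Y hY =>
      (Submodule.mem_orthogonal _ _).2 fun X hX => h𝔞𝔪 X hX Y hY
    have hdec : 𝔞 ⊔ (𝔪 ⊔ ⨆ γ ∈ Δ𝔤, rootSpace bk 𝔞 γ) = ⊤ := by rwa [← sup_assoc]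
    exact Submodule.orthogonal_le_of_sup_eq_top hdec (sup_le h𝔪_perp (iSup₂_le hroot_perp))
      (Submodule.IsOrtho.ge hperp (Submodule.mem_span_singleton_self _))

/-- given a Cartan-type involution `θ` with `θ(𝔤_γ) = 𝔤_{−γ}` and
`π(θ(Y)) = −π(Y)*`, and a choice of positive roots `Δ(𝔤)⁺`, an `A`-invariant subspace
`W` is nice iff `π(𝔤_γ)W ⊥ W` for every `γ ∈ Δ(𝔤)⁺`. -/
theorem isNice_iff_positive_roots_orthogonality
    {𝔤 V : Type*} [NormedAddCommGroup 𝔤] [InnerProductSpace ℝ 𝔤] [FiniteDimensional ℝ 𝔤]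
    [NormedAddCommGroup V] [InnerProductSpace ℝ V] [FiniteDimensional ℝ V]
    -- the Lie bracket of `𝔤` and the representation `π : 𝔤 → 𝔤𝔩(V)`:
    (bk : 𝔤 →ₗ[ℝ] 𝔤 →ₗ[ℝ] 𝔤)
    (hbk_alt : ∀ X : 𝔤, bk X X = 0)
    (hbk_jac : ∀ X Y Z : 𝔤, bk X (bk Y Z) + bk Y (bk Z X) + bk Z (bk X Y) = 0)
    (π : 𝔤 →ₗ[ℝ] V →L[ℝ] V)
    (hrep : ∀ X Y : 𝔤, π (bk X Y) = π X * π Y - π Y * π X)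
    -- `𝔞` is an abelian subalgebra acting by self-adjoint operators:
    (𝔞 : Submodule ℝ 𝔤)
    (hab : ∀ X ∈ 𝔞, ∀ Y ∈ 𝔞, bk X Y = 0)
    (hsa : ∀ X ∈ 𝔞, ∀ v w : V, ⟪(π X) v, w⟫_ℝ = ⟪v, (π X) w⟫_ℝ)
    -- roots and weights:
    (Δ𝔤 : Finset 𝔤) (hΔ𝔤 : ∀ γ ∈ Δ𝔤, γ ∈ 𝔞 ∧ γ ≠ 0)
    (ΔV : Finset 𝔤) (hΔV : ∀ α ∈ ΔV, α ∈ 𝔞)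
    -- `𝔤₀ = 𝔞 ⊕ 𝔪` is the centralizer of `𝔞`, `π` is skew-adjoint on `𝔪`:
    (𝔪 : Submodule ℝ 𝔤)
    (hskew : ∀ Y ∈ 𝔪, ∀ v w : V, ⟪(π Y) v, w⟫_ℝ = -⟪v, (π Y) w⟫_ℝ)
    (h𝔞𝔪 : ∀ X ∈ 𝔞, ∀ Y ∈ 𝔪, ⟪X, Y⟫_ℝ = 0)
    (h𝔤₀ : ∀ Z : 𝔤, (∀ X ∈ 𝔞, bk X Z = 0) ↔ Z ∈ 𝔞 ⊔ 𝔪)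
    -- the orthogonal restricted-root space decomposition of `𝔤`:
    (h𝔤dec : (𝔞 ⊔ 𝔪) ⊔ (⨆ γ ∈ Δ𝔤, rootSpace bk 𝔞 γ) = ⊤)
    (h𝔤orth : ∀ γ ∈ Δ𝔤, ∀ Y ∈ rootSpace bk 𝔞 γ, ∀ Z : 𝔤,
      (Z ∈ 𝔞 ⊔ 𝔪 ∨ ∃ γ' ∈ Δ𝔤, γ' ≠ γ ∧ Z ∈ rootSpace bk 𝔞 γ') → ⟪Y, Z⟫_ℝ = 0)
    -- the weight space decomposition of `V`:
    (hVdec : (⨆ α ∈ ΔV, wtSpace π 𝔞 α) = ⊤)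
    (W : Submodule ℝ V) (hWinv : AInvariant π 𝔞 W)
    -- the Cartan involution `θ`:
    (θ : 𝔤 →ₗ[ℝ] 𝔤) (hθinv : ∀ Z : 𝔤, θ (θ Z) = Z)
    (hθroot : ∀ γ ∈ Δ𝔤, Submodule.map θ (rootSpace bk 𝔞 γ) = rootSpace bk 𝔞 (-γ))
    (hθadj : ∀ Z : 𝔤, ∀ v w : V, ⟪(π (θ Z)) v, w⟫_ℝ = -⟪v, (π Z) w⟫_ℝ)
    -- a set of positive roots:
    (Δp : Finset 𝔤) (hΔp : ∀ γ : 𝔤, γ ∈ Δ𝔤 ↔ (γ ∈ Δp ∨ -γ ∈ Δp))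
    (hΔpdisj : ∀ γ ∈ Δp, -γ ∉ Δp)
    :
    (∀ w ∈ W, w ≠ 0 → momentMap π w ∈ 𝔞) ↔
      (∀ γ ∈ Δp, ∀ Y ∈ rootSpace bk 𝔞 γ, ∀ u ∈ W, ∀ z ∈ W, ⟪(π Y) u, z⟫_ℝ = 0) :=
  isNice_iff_positive_roots_orthogonality_general bk π hrep 𝔞 hsa Δ𝔤 hΔ𝔤 𝔪 hskew h𝔞𝔪 h𝔤dec h𝔤orth W
    hWinv θ hθroot hθadj Δp hΔp
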